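/- For every integer d ≥ 3 and every sequence u = (u_j)_{j∈ℕ} of real numbers with u_j ∈ [1,2] for all j, one has Σ_{j∈ℕ} u_j²·d^{-(j+1)} − (Σ_{j∈ℕ} u_j·d^{-(j+1)})² ≥ (d−2)/(d−1)². -/

import Mathlib

/-!
With weights `w j = d^{-(j+1)}`, of total mass `c = 1/(d-1)`, the weighted Cauchy–Schwarz
inequality gives `(∑ u w)² ≤ c ∑ u² w`, so the left-hand side is at least `(1/c - 1) (∑ u w)²`;
since `u ≥ 1` we have `∑ u w ≥ c`, and the bound becomes `c (1 - c) = (d-2)/(d-1)²`.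
-/

variable {ι : Type*}

theorem sq_tsum_mul_le_tsum_sq_mul_mul_tsum {w f : ι → ℝ} (hw : ∀ i, 0 ≤ w i)
    (hws : Summable w) (hfw : Summable fun i => f i * w i)
    (hf2w : Summable fun i => f i ^ 2 * w i) :
    (∑' i, f i * w i) ^ 2 ≤ (∑' i, f i ^ 2 * w i) * ∑' i, w i := by
  -- the expanded form of `∑ (f i - x)² w i ≥ 0`
  have hquad : ∀ x : ℝ, 0 ≤ (∑' i, w i) * (x * x) + (-2 * ∑' i, f i * w i) * x
      + ∑' i, f i ^ 2 * w i := by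
    intro x
    have hsum := ((hws.hasSum.mul_right (x * x)).add (hfw.hasSum.mul_left (-2 * x))).add
      hf2w.hasSum
    have := hsum.nonneg fun i => by nlinarith [mul_nonneg (sq_nonneg (f i - x)) (hw i)]
    linarith
  have hdisc := discrim_le_zero hquad
  rw [discrim] at hdisc
  linarith

theorem mul_one_sub_le_tsum_sq_mul_sub_sq {w u : ι → ℝ} {c : ℝ} (hw : ∀ i, 0 ≤ w i)
    (hws : HasSum w c) (hc₀ : 0 < c) (hc₁ : c ≤ 1) (hu : ∀ i, 1 ≤ u i)
    (huw : Summable fun i => u i * w i) (hu2w : Summable fun i => u i ^ 2 * w i) :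
    c * (1 - c) ≤ (∑' i, u i ^ 2 * w i) - (∑' i, u i * w i) ^ 2 := by
  have hCS := sq_tsum_mul_le_tsum_sq_mul_mul_tsum hw hws.summable huw hu2w
  rw [hws.tsum_eq] at hCS
  have hmean : c ≤ ∑' i, u i * w i :=
    hws.tsum_eq ▸ hws.summable.tsum_le_tsum (fun i => le_mul_of_one_le_left (hw i) (hu i)) huw
  refine le_of_mul_le_mul_left ?_ hc₀
  nlinarith [mul_le_mul hmean hmean hc₀.le (hc₀.le.trans hmean)]

theorem summable_mul_of_abs_le {w f : ι → ℝ} {C : ℝ} (hw : ∀ i, 0 ≤ w i) (hws : Summable w)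
    (hf : ∀ i, |f i| ≤ C) : Summable fun i => f i * w i :=
  (hws.mul_left C).of_norm_bounded fun i => by
    rw [Real.norm_eq_abs, abs_mul, abs_of_nonneg (hw i)]
    exact mul_le_mul_of_nonneg_right (hf i) (hw i)

theorem hasSum_zpow_neg_succ {a : ℝ} (ha : 1 < a) :
    HasSum (fun j : ℕ => a ^ (-(j : ℤ) - 1)) (a - 1)⁻¹ := by
  have ha₀ : 0 < a := one_pos.trans ha
  have hgeom := (hasSum_geometric_of_lt_one (inv_nonneg.2 ha₀.le)
    (inv_lt_one_of_one_lt₀ ha)).mul_left a⁻¹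
  rw [show (a - 1)⁻¹ = a⁻¹ * (1 - a⁻¹)⁻¹ by have : a - 1 ≠ 0 := (sub_pos.2 ha).ne'; field_simp]
  refine hgeom.congr_fun fun j => ?_
  rw [show -(j : ℤ) - 1 = -((j + 1 : ℕ) : ℤ) by push_cast; ring, zpow_neg, zpow_natCast,
    pow_succ', mul_inv, inv_pow]

theorem variance_lower_bound (d : ℕ) (hd : 3 ≤ d)
    (u : ℕ → ℝ) (hu : ∀ j, u j ∈ Set.Icc (1 : ℝ) 2) :
    ((d : ℝ) - 2) / ((d : ℝ) - 1) ^ 2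
      ≤ (∑' j : ℕ, (u j) ^ 2 * (d : ℝ) ^ (-(j : ℤ) - 1))
        - (∑' j : ℕ, u j * (d : ℝ) ^ (-(j : ℤ) - 1)) ^ 2 := by
  have hd₃ : (3 : ℝ) ≤ d := by exact_mod_cast hd
  have hw : ∀ j : ℕ, 0 ≤ (d : ℝ) ^ (-(j : ℤ) - 1) := fun j => zpow_nonneg (by linarith) _
  have hws := hasSum_zpow_neg_succ (a := (d : ℝ)) (by linarith)
  have hu_abs : ∀ j, |u j| ≤ 2 := fun j => abs_le.2 ⟨by linarith [(hu j).1], (hu j).2⟩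
  have hu2_abs : ∀ j, |u j ^ 2| ≤ 4 := fun j => by
    rw [abs_pow]; nlinarith [abs_nonneg (u j), hu_abs j]
  have key := mul_one_sub_le_tsum_sq_mul_sub_sq hw hws (inv_pos.2 (by linarith))
    (inv_le_one_of_one_le₀ (by linarith)) (fun j => (hu j).1)
    (summable_mul_of_abs_le hw hws.summable hu_abs)
    (summable_mul_of_abs_le hw hws.summable hu2_abs)
  convert key using 1
  have : (d : ℝ) - 1 ≠ 0 := by linarith
  field_simp
  ring
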